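/- arXiv:1806.00344 — 5 statements merged into one kernel-verified Lean document; each statement's English description precedes it below -/
import Mathlib

section
/- The rank R induces an order isomorphism between the quotient of the set of simple types by ∼, ordered by the relation induced by ≼, and the set of ordinals {α | 0 < α < ε₀} with its usual order; in particular, ≼ induces a well-ordering of order type ε₀ on the ∼-classes of simple types. -/
/-- Simple types over a single base type `N`. -/
inductive SType : Type
  | N : SType
  | arrow : SType → SType → SType
  | prod : SType → SType → SType
  deriving DecidableEq

/-- Trivial isomorphism: the least congruence on simple types containing the
four generating equivalences. -/
inductive TrivIso : SType → SType → Prop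
  | refl (σ : SType) : TrivIso σ σ
  | symm {σ τ : SType} : TrivIso σ τ → TrivIso τ σ
  | trans {σ τ ρ : SType} : TrivIso σ τ → TrivIso τ ρ → TrivIso σ ρ
  | arrowCongr {σ σ' τ τ' : SType} :
      TrivIso σ σ' → TrivIso τ τ' → TrivIso (.arrow σ τ) (.arrow σ' τ')
  | prodCongr {σ σ' τ τ' : SType} :
      TrivIso σ σ' → TrivIso τ τ' → TrivIso (.prod σ τ) (.prod σ' τ')
  | curry (ρ σ τ : SType) :
      TrivIso (.arrow (.prod ρ σ) τ) (.arrow ρ (.arrow σ τ))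
  | distrib (ρ σ τ : SType) :
      TrivIso (.arrow ρ (.prod σ τ)) (.prod (.arrow ρ σ) (.arrow ρ τ))
  | assoc (ρ σ τ : SType) :
      TrivIso (.prod ρ (.prod σ τ)) (.prod (.prod ρ σ) τ)
  | comm (σ τ : SType) : TrivIso (.prod σ τ) (.prod τ σ)

universe u

namespace Ordinal

/-- Hessenberg natural sum, as formerly defined in Mathlib (`Ordinal.nadd`, since removed). -/
noncomputable def nadd : Ordinal.{u} → Ordinal.{u} → Ordinal.{u}
  | a, b =>
    max (blsub.{u, u} a fun a' _ => nadd a' b) (blsub.{u, u} b fun b' _ => nadd a b')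
termination_by o₁ o₂ => (o₁, o₂)

end Ordinal

namespace SType

/-- Auxiliary measure justifying the well-founded recursion defining the rank. -/
def meas : SType → ℕ
  | N => 2
  | prod a b => meas a * meas b
  | arrow a b => (meas a + 1) * meas b

theorem two_le_meas (σ : SType) : 2 ≤ meas σ := by
  induction σ with
  | N => simp [meas]
  | arrow a b iha ihb => simp only [meas]; nlinarith
  | prod a b iha ihb => simp only [meas]; nlinarith

/-- The ordinal rank of a simple type, defined by well-founded recursion:
`R N = 1`, `R (σ × τ) = R σ ♯ R τ` (Hessenberg natural sum),
`R (σ → N) = ω ^ R σ`, `R (σ → (τ × ρ)) = R (σ → τ) ♯ R (σ → ρ)`,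
`R (σ → (τ → ρ)) = R ((σ × τ) → ρ)`. -/
noncomputable def R : SType → Ordinal.{0}
  | N => 1
  | prod a b => Ordinal.nadd (R a) (R b)
  | arrow a N => Ordinal.omega0 ^ R a
  | arrow a (prod b c) => Ordinal.nadd (R (arrow a b)) (R (arrow a c))
  | arrow a (arrow b c) => R (arrow (prod a b) c)
termination_by σ => meas σ
decreasing_by
  · simp only [meas]; nlinarith [two_le_meas a, two_le_meas b]
  · simp only [meas]; nlinarith [two_le_meas a, two_le_meas b]
  · simp only [meas]; nlinarith [two_le_meas a]
  · simp only [meas]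
    have h : meas b < meas b * meas c := by nlinarith [two_le_meas b, two_le_meas c]
    exact mul_lt_mul_of_pos_left h (by positivity)
  · simp only [meas]
    have h : meas c < meas b * meas c := by nlinarith [two_le_meas b, two_le_meas c]
    exact mul_lt_mul_of_pos_left h (by positivity)
  · simp only [meas]; nlinarith [two_le_meas a, two_le_meas b, two_le_meas c]

end SType

open SType (R)

/-- `ε₀`, the least ordinal `α` with `ω ^ α = α`. -/
noncomputable def eps0 : Ordinal.{0} := sInf {a : Ordinal | Ordinal.omega0 ^ a = a}

/-- The setoid of simple types under trivial isomorphism. -/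
def trivSetoid : Setoid SType :=
  ⟨TrivIso, ⟨TrivIso.refl, TrivIso.symm, TrivIso.trans⟩⟩

/-!
`R` is invariant under the generating isomorphisms because `♯` is associative and commutative and
the clauses for `σ → _` mirror currying and distributivity. Conversely, every type is `∼` to an
atom `N` or `ρ → N`, possibly times a rest, where the rank of the atom is the leading power
`ω ^ log ω (R σ)` of the Cantor normal form of `R σ`. As `♯` is cancellative, equal ranks give atoms
and rests of equal rank, and induction on the rank yields `∼`: below `ε₀` we have `e < ω ^ e`, so
the exponent of the atom is smaller. Surjectivity onto `(0, ε₀)` peels off the leading power in the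
same way, using `ω ^ e ♯ β = ω ^ e + β` for `β < ω ^ (e + 1)`. The ordinal arithmetic behind all
this is that each `ω ^ e` is closed under `♯`, by induction on `e` using
`p ♯ q ≤ c * (p / c ♯ q / c) + (p % c ♯ q % c)` for `c` closed under `♯`.
-/

open Ordinal Order SType

local notation:65 a:65 " ♯ " b:66 => Ordinal.nadd a b

namespace Ordinal

variable {a b c e : Ordinal.{u}}

set_option linter.deprecated false in
theorem lt_nadd_iff : a < b ♯ c ↔ (∃ b' < b, a ≤ b' ♯ c) ∨ ∃ c' < c, a ≤ b ♯ c' := by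
  rw [nadd]
  simp [lt_blsub_iff]

set_option linter.deprecated false in
theorem nadd_le_iff : b ♯ c ≤ a ↔ (∀ b' < b, b' ♯ c < a) ∧ ∀ c' < c, b ♯ c' < a := by
  rw [nadd]
  simp [blsub_le_iff]

theorem nadd_lt_nadd_left (h : b < c) (a : Ordinal.{u}) : a ♯ b < a ♯ c :=
  lt_nadd_iff.2 (.inr ⟨b, h, le_rfl⟩)

theorem nadd_lt_nadd_right (h : b < c) (a : Ordinal.{u}) : b ♯ a < c ♯ a :=
  lt_nadd_iff.2 (.inl ⟨b, h, le_rfl⟩)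

theorem nadd_left_strictMono (a : Ordinal.{u}) : StrictMono (a ♯ ·) :=
  fun _ _ h => nadd_lt_nadd_left h a

theorem nadd_right_strictMono (a : Ordinal.{u}) : StrictMono (· ♯ a) :=
  fun _ _ h => nadd_lt_nadd_right h a

theorem nadd_comm (a b : Ordinal.{u}) : a ♯ b = b ♯ a := by
  suffices h : ∀ a b : Ordinal.{u}, a ♯ b ≤ b ♯ a from (h a b).antisymm (h b a)
  intro a
  induction a using WellFoundedLT.induction with | ind a iha
  intro b
  induction b using WellFoundedLT.induction with | ind b ihb
  exact nadd_le_iff.2 ⟨fun a' ha' => (iha a' ha' b).trans_lt (nadd_lt_nadd_left ha' b),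
    fun b' hb' => (ihb b' hb').trans_lt (nadd_lt_nadd_right hb' a)⟩

theorem nadd_assoc (a b c : Ordinal.{u}) : a ♯ b ♯ c = a ♯ (b ♯ c) := by
  suffices h : ∀ a b c : Ordinal.{u}, a ♯ b ♯ c ≤ a ♯ (b ♯ c) by
    refine (h a b c).antisymm ?_
    calc a ♯ (b ♯ c) = c ♯ b ♯ a := by rw [nadd_comm a, nadd_comm b]
      _ ≤ c ♯ (b ♯ a) := h c b a
      _ = a ♯ b ♯ c := by rw [nadd_comm c, nadd_comm b]
  intro a
  induction a using WellFoundedLT.induction with | ind a iha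
  intro b
  induction b using WellFoundedLT.induction with | ind b ihb
  intro c
  induction c using WellFoundedLT.induction with | ind c ihc
  refine nadd_le_iff.2 ⟨fun x hx => ?_, fun c' hc' =>
    (ihc c' hc').trans_lt (nadd_lt_nadd_left (nadd_lt_nadd_left hc' b) a)⟩
  rcases lt_nadd_iff.1 hx with ⟨a', ha', hx⟩ | ⟨b', hb', hx⟩
  · calc x ♯ c ≤ a' ♯ b ♯ c := (nadd_right_strictMono c).monotone hx
      _ ≤ a' ♯ (b ♯ c) := iha a' ha' b c
      _ < a ♯ (b ♯ c) := nadd_lt_nadd_right ha' _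
  · calc x ♯ c ≤ a ♯ b' ♯ c := (nadd_right_strictMono c).monotone hx
      _ ≤ a ♯ (b' ♯ c) := ihb b' hb' c
      _ < a ♯ (b ♯ c) := nadd_lt_nadd_left (nadd_lt_nadd_right hb' c) a

theorem le_self_nadd (a b : Ordinal.{u}) : a ≤ a ♯ b :=
  (nadd_right_strictMono b).le_apply

theorem le_nadd_self (a b : Ordinal.{u}) : b ≤ a ♯ b :=
  nadd_comm b a ▸ le_self_nadd b a

theorem add_le_nadd (a b : Ordinal.{u}) : a + b ≤ a ♯ b := by
  induction b using WellFoundedLT.induction with | ind b ih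
  refine le_of_forall_lt fun x hx => ?_
  rcases lt_or_ge x a with h | h
  · exact h.trans_le (le_self_nadd a b)
  · obtain ⟨d, rfl⟩ := exists_add_of_le h
    have hd : d < b := (add_lt_add_iff_left a).1 hx
    exact (ih d hd).trans_lt (nadd_lt_nadd_left hd a)

theorem nadd_zero (a : Ordinal.{u}) : a ♯ 0 = a := by
  induction a using WellFoundedLT.induction with | ind a ih
  refine le_antisymm (nadd_le_iff.2 ⟨fun a' ha' => (ih a' ha').trans_lt ha', by simp⟩) ?_
  exact le_self_nadd a 0

theorem natCast_nadd_natCast (m n : ℕ) : (m : Ordinal.{u}) ♯ n = (m + n : ℕ) := by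
  induction m using Nat.strong_induction_on generalizing n with | _ m ihm
  induction n using Nat.strong_induction_on with | _ n ihn
  refine le_antisymm (nadd_le_iff.2 ⟨fun x hx => ?_, fun x hx => ?_⟩)
    (by simpa using add_le_nadd (m : Ordinal.{u}) n)
  · obtain ⟨k, rfl⟩ := lt_omega0.1 (hx.trans (natCast_lt_omega0 m))
    have hk : k < m := by exact_mod_cast hx
    rw [ihm k hk]
    exact_mod_cast (by omega : k + n < m + n)
  · obtain ⟨k, rfl⟩ := lt_omega0.1 (hx.trans (natCast_lt_omega0 n))
    have hk : k < n := by exact_mod_cast hx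
    rw [ihn k hk]
    exact_mod_cast (by omega : m + k < m + n)

theorem isPrincipal_nadd_omega0 : IsPrincipal nadd ω := by
  intro a b ha hb
  obtain ⟨m, rfl⟩ := lt_omega0.1 ha
  obtain ⟨n, rfl⟩ := lt_omega0.1 hb
  rw [natCast_nadd_natCast]
  exact natCast_lt_omega0 _

theorem mul_div_nadd_add_mod_nadd_lt (hc : IsPrincipal nadd c) {u p : Ordinal.{u}} (hu : u < p)
    (q : Ordinal.{u}) :
    c * (u / c ♯ q / c) + (u % c ♯ q % c) < c * (p / c ♯ q / c) + (p % c ♯ q % c) := by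
  rcases eq_or_ne c 0 with rfl | hc0
  · simpa using nadd_lt_nadd_right hu q
  rcases (div_le_left hu.le c).lt_or_eq with hlt | heq
  · calc _ < c * (u / c ♯ q / c) + c := add_lt_add_right (hc (mod_lt u hc0) (mod_lt q hc0)) _
      _ = c * succ (u / c ♯ q / c) := (mul_succ _ _).symm
      _ ≤ c * (p / c ♯ q / c) := mul_le_mul_right (succ_le_of_lt (nadd_lt_nadd_right hlt _)) c
      _ ≤ _ := le_self_add
  · have hmod : u % c < p % c := by
      rw [← div_add_mod u c, ← div_add_mod p c, heq] at hu
      exact (add_lt_add_iff_left _).1 hu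
    rw [heq]
    exact add_lt_add_right (nadd_lt_nadd_right hmod _) _

theorem nadd_le_mul_div_nadd_add_mod_nadd (hc : IsPrincipal nadd c) (p q : Ordinal.{u}) :
    p ♯ q ≤ c * (p / c ♯ q / c) + (p % c ♯ q % c) := by
  induction p using WellFoundedLT.induction generalizing q with | ind p ihp
  induction q using WellFoundedLT.induction with | ind q ihq
  refine nadd_le_iff.2 ⟨fun u hu => (ihp u hu q).trans_lt (mul_div_nadd_add_mod_nadd_lt hc hu q),
    fun v hv => ?_⟩
  calc p ♯ v ≤ c * (p / c ♯ v / c) + (p % c ♯ v % c) := ihq v hv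
    _ = c * (v / c ♯ p / c) + (v % c ♯ p % c) := by rw [nadd_comm (p / c), nadd_comm (p % c)]
    _ < c * (q / c ♯ p / c) + (q % c ♯ p % c) := mul_div_nadd_add_mod_nadd_lt hc hv p
    _ = c * (p / c ♯ q / c) + (p % c ♯ q % c) := by rw [nadd_comm (q / c), nadd_comm (q % c)]

theorem isPrincipal_nadd_omega0_opow (e : Ordinal.{u}) : IsPrincipal nadd (ω ^ e) := by
  induction e using WellFoundedLT.induction with | ind e ih
  intro a b ha hb
  rcases zero_or_succ_or_isSuccLimit e with rfl | ⟨f, rfl⟩ | he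
  · rw [opow_zero, Order.lt_one_iff] at ha hb
    simp [ha, hb, nadd_zero]
  · have hc0 : ω ^ f ≠ 0 := (opow_pos f omega0_pos).ne'
    rw [opow_succ] at ha hb ⊢
    have hdiv : a / ω ^ f ♯ b / ω ^ f < ω := isPrincipal_nadd_omega0
      ((lt_mul_iff_div_lt hc0).1 ha) ((lt_mul_iff_div_lt hc0).1 hb)
    calc a ♯ b ≤ ω ^ f * (a / ω ^ f ♯ b / ω ^ f) + (a % ω ^ f ♯ b % ω ^ f) :=
          nadd_le_mul_div_nadd_add_mod_nadd (ih f (lt_succ f)) a b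
      _ < ω ^ f * (a / ω ^ f ♯ b / ω ^ f) + ω ^ f :=
          add_lt_add_right (ih f (lt_succ f) (mod_lt a hc0) (mod_lt b hc0)) _
      _ = ω ^ f * succ (a / ω ^ f ♯ b / ω ^ f) := (mul_succ _ _).symm
      _ ≤ ω ^ f * ω := mul_le_mul_right (succ_le_of_lt hdiv) _
  · obtain ⟨e₁, he₁, ha⟩ := (lt_opow_of_isSuccLimit omega0_ne_zero he).1 ha
    obtain ⟨e₂, he₂, hb⟩ := (lt_opow_of_isSuccLimit omega0_ne_zero he).1 hb
    have hmax : max e₁ e₂ < e := max_lt he₁ he₂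
    exact (ih _ hmax (ha.trans_le (opow_le_opow_right omega0_pos (le_max_left _ _)))
      (hb.trans_le (opow_le_opow_right omega0_pos (le_max_right _ _)))).trans
      ((opow_lt_opow_iff_right one_lt_omega0).2 hmax)

theorem omega0_opow_nadd_of_lt (hb : b < ω ^ succ e) : ω ^ e ♯ b = ω ^ e + b := by
  have hc0 : ω ^ e ≠ 0 := (opow_pos e omega0_pos).ne'
  rw [opow_succ] at hb
  obtain ⟨n, hn⟩ := lt_omega0.1 ((lt_mul_iff_div_lt hc0).1 hb)
  refine le_antisymm ?_ (add_le_nadd _ _)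
  calc ω ^ e ♯ b ≤ ω ^ e * (ω ^ e / ω ^ e ♯ b / ω ^ e) + (ω ^ e % ω ^ e ♯ b % ω ^ e) :=
        nadd_le_mul_div_nadd_add_mod_nadd (isPrincipal_nadd_omega0_opow e) _ b
    _ = ω ^ e + (ω ^ e * (b / ω ^ e) + b % ω ^ e) := by
      rw [div_self hc0, mod_self, hn, ← Nat.cast_one, natCast_nadd_natCast, nadd_comm 0, nadd_zero]
      push_cast
      rw [mul_add, mul_one, add_assoc]
    _ = ω ^ e + b := by rw [div_add_mod]

theorem log_omega0_nadd (ha : a ≠ 0) (hb : b ≠ 0) :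
    log ω (a ♯ b) = max (log ω a) (log ω b) := by
  have hmono : Monotone (ω ^ · : Ordinal.{u} → Ordinal.{u}) :=
    fun _ _ h => opow_le_opow_right omega0_pos h
  refine (log_eq_iff one_lt_omega0 (pos_iff_ne_zero.1 ?_) _).2 ⟨?_, ?_⟩
  · exact (pos_iff_ne_zero.2 ha).trans_le (le_self_nadd a b)
  · rw [hmono.map_max]
    exact max_le ((opow_log_le_self ω ha).trans (le_self_nadd a b))
      ((opow_log_le_self ω hb).trans (le_nadd_self a b))
  · rw [← succ_eq_add_one]
    exact isPrincipal_nadd_omega0_opow _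
      ((lt_opow_succ_log_self one_lt_omega0 a).trans_le (hmono (succ_le_succ (le_max_left _ _))))
      ((lt_opow_succ_log_self one_lt_omega0 b).trans_le (hmono (succ_le_succ (le_max_right _ _))))

theorem lt_omega0_opow_self_of_lt_epsilon_zero (ha : a < ε₀) : a < ω ^ a :=
  lt_of_not_ge fun h => ha.not_ge (epsilon_zero_le_of_omega0_opow_le h)

theorem omega0_opow_lt_epsilon_zero (ha : a < ε₀) : ω ^ a < ε₀ := by
  simpa only [omega0_opow_epsilon] using (opow_lt_opow_iff_right one_lt_omega0).2 ha

theorem nadd_lt_epsilon_zero (ha : a < ε₀) (hb : b < ε₀) : a ♯ b < ε₀ := by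
  have h := isPrincipal_nadd_omega0_opow (ε_ 0 : Ordinal.{u})
  rw [omega0_opow_epsilon] at h
  exact h ha hb

end Ordinal

theorem eps0_eq_epsilon_zero : eps0 = ε₀ :=
  le_antisymm (csInf_le' (omega0_opow_epsilon 0))
    (le_csInf ⟨_, omega0_opow_epsilon 0⟩ fun _ h => epsilon_zero_le_of_omega0_opow_le h.le)

namespace SType

variable {σ τ f g : SType}

@[simp] theorem R_N : R N = 1 := R.eq_1

@[simp] theorem R_prod (σ τ : SType) : R (prod σ τ) = R σ ♯ R τ := R.eq_2 σ τ

@[simp] theorem R_arrow_N (σ : SType) : R (arrow σ N) = ω ^ R σ := R.eq_3 σ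

@[simp] theorem R_arrow_prod (σ τ ρ : SType) :
    R (arrow σ (prod τ ρ)) = R (arrow σ τ) ♯ R (arrow σ ρ) := R.eq_4 σ τ ρ

@[simp] theorem R_arrow_arrow (σ τ ρ : SType) :
    R (arrow σ (arrow τ ρ)) = R (arrow (prod σ τ) ρ) := R.eq_5 σ τ ρ

theorem R_pos (σ : SType) : 0 < R σ := by
  induction σ using R.induct with
  | case1 => simp
  | case2 σ τ hσ _ => exact hσ.trans_le (by simpa using le_self_nadd _ _)
  | case3 σ _ => simpa using opow_pos _ omega0_pos
  | case4 σ τ ρ hτ _ => exact hτ.trans_le (by simpa using le_self_nadd _ _)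
  | case5 σ τ ρ h => simpa using h

theorem R_lt_epsilon_zero (σ : SType) : R σ < ε₀ := by
  induction σ using R.induct with
  | case1 => simpa using one_lt_omega0.trans (omega0_lt_epsilon 0)
  | case2 σ τ hσ hτ => simpa using nadd_lt_epsilon_zero hσ hτ
  | case3 σ hσ => simpa using omega0_opow_lt_epsilon_zero hσ
  | case4 σ τ ρ hτ hρ => simpa using nadd_lt_epsilon_zero hτ hρ
  | case5 σ τ ρ h => simpa using h

theorem R_lt_R_prod_left (σ τ : SType) : R σ < R (prod σ τ) := by
  simpa [nadd_zero] using nadd_lt_nadd_left (R_pos τ) (R σ)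

theorem R_lt_R_prod_right (σ τ : SType) : R τ < R (prod σ τ) := by
  simpa [nadd_comm] using R_lt_R_prod_left τ σ

theorem R_arrow_congr_left {σ σ' : SType} (h : R σ = R σ') (τ : SType) :
    R (arrow σ τ) = R (arrow σ' τ) := by
  induction τ generalizing σ σ' with
  | N => simp [h]
  | prod τ ρ ihτ ihρ => simp [ihτ h, ihρ h]
  | arrow τ ρ _ ihρ => simpa using ihρ (by simp [h])

/-- Congruence in the codomain of `→` needs the stronger statement about `ρ → σ`. -/
theorem _root_.TrivIso.R_arrow_eq_and_R_eq (h : TrivIso σ τ) :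
    (∀ ρ, R (arrow ρ σ) = R (arrow ρ τ)) ∧ R σ = R τ := by
  induction h with
  | refl σ => exact ⟨fun _ => rfl, rfl⟩
  | symm _ ih => exact ⟨fun ρ => (ih.1 ρ).symm, ih.2.symm⟩
  | trans _ _ ih₁ ih₂ => exact ⟨fun ρ => (ih₁.1 ρ).trans (ih₂.1 ρ), ih₁.2.trans ih₂.2⟩
  | @arrowCongr σ σ' τ τ' _ _ ihσ ihτ =>
    refine ⟨fun ρ => ?_, (R_arrow_congr_left ihσ.2 τ).trans (ihτ.1 σ')⟩
    rw [R_arrow_arrow, R_arrow_arrow, R_arrow_congr_left (σ' := prod ρ σ') (by simp [ihσ.2]) τ]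
    exact ihτ.1 _
  | prodCongr _ _ ihσ ihτ => exact ⟨fun ρ => by simp [ihσ.1 ρ, ihτ.1 ρ], by simp [ihσ.2, ihτ.2]⟩
  | curry ρ σ τ =>
    refine ⟨fun π => ?_, by simp⟩
    simp only [R_arrow_arrow]
    exact R_arrow_congr_left (by simp [nadd_assoc]) τ
  | distrib ρ σ τ => exact ⟨fun π => by simp, by simp⟩
  | assoc ρ σ τ => exact ⟨fun π => by simp [nadd_assoc], by simp [nadd_assoc]⟩
  | comm σ τ => exact ⟨fun π => by simp [nadd_comm], by simp [nadd_comm]⟩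

theorem _root_.TrivIso.R_eq (h : TrivIso σ τ) : R σ = R τ :=
  h.R_arrow_eq_and_R_eq.2

inductive IsAtom : SType → Prop
  | base : IsAtom N
  | arrowBase (σ : SType) : IsAtom (arrow σ N)

theorem IsAtom.trivIso_of_R_eq (hf : IsAtom f) (hg : IsAtom g) (h : R f = R g)
    (ih : ∀ σ τ, R σ = R τ → R σ < R f → TrivIso σ τ) : TrivIso f g := by
  have one_ne_R_arrow_N (σ : SType) : (1 : Ordinal) ≠ ω ^ R σ := by
    rw [← opow_zero ω, Ne, opow_right_inj one_lt_omega0]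
    exact (R_pos σ).ne
  cases hf with
  | base => cases hg with
    | base => exact .refl N
    | arrowBase τ => exact absurd (by simpa using h) (one_ne_R_arrow_N τ)
  | arrowBase σ => cases hg with
    | base => exact absurd (by simpa using h.symm) (one_ne_R_arrow_N σ)
    | arrowBase τ =>
      have hστ : R σ = R τ := (opow_right_inj one_lt_omega0).1 (by simpa using h)
      refine .arrowCongr (ih σ τ hστ ?_) (.refl N)
      simpa using lt_omega0_opow_self_of_lt_epsilon_zero (R_lt_epsilon_zero σ)

def HasLeadingAtom (σ : SType) : Prop :=
  ∃ f, IsAtom f ∧ R f = ω ^ log ω (R σ) ∧ (TrivIso σ f ∨ ∃ ρ, TrivIso σ (prod f ρ))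

theorem HasLeadingAtom.of_trivIso (h : TrivIso σ τ) (hτ : HasLeadingAtom τ) :
    HasLeadingAtom σ := by
  obtain ⟨f, hf, hfR, hτf | ⟨ρ, hτf⟩⟩ := hτ
  · exact ⟨f, hf, h.R_eq ▸ hfR, .inl (h.trans hτf)⟩
  · exact ⟨f, hf, h.R_eq ▸ hfR, .inr ⟨ρ, h.trans hτf⟩⟩

theorem HasLeadingAtom.prod_of_log_le (hσ : HasLeadingAtom σ)
    (hle : log ω (R τ) ≤ log ω (R σ)) : HasLeadingAtom (prod σ τ) := by
  obtain ⟨f, hf, hfR, hσf⟩ := hσ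
  refine ⟨f, hf, ?_, .inr ?_⟩
  · rw [R_prod, log_omega0_nadd (R_pos σ).ne' (R_pos τ).ne', max_eq_left hle, hfR]
  rcases hσf with hσf | ⟨ρ, hσf⟩
  · exact ⟨τ, .prodCongr hσf (.refl τ)⟩
  · exact ⟨prod ρ τ, (TrivIso.prodCongr hσf (.refl τ)).trans (.symm (.assoc f ρ τ))⟩

theorem HasLeadingAtom.prod (hσ : HasLeadingAtom σ) (hτ : HasLeadingAtom τ) :
    HasLeadingAtom (prod σ τ) :=
  (le_total (log ω (R τ)) (log ω (R σ))).elim hσ.prod_of_log_le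
    fun h => (hτ.prod_of_log_le h).of_trivIso (.comm σ τ)

theorem hasLeadingAtom (σ : SType) : HasLeadingAtom σ := by
  induction σ using R.induct with
  | case1 => exact ⟨N, .base, by simp [log_one_right], .inl (.refl N)⟩
  | case2 σ τ hσ hτ => exact hσ.prod hτ
  | case3 σ _ => exact ⟨_, .arrowBase σ, by simp [log_opow one_lt_omega0], .inl (.refl _)⟩
  | case4 σ τ ρ hτ hρ => exact (hτ.prod hρ).of_trivIso (.distrib σ τ ρ)
  | case5 σ τ ρ h => exact h.of_trivIso (TrivIso.curry σ τ ρ).symm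

theorem trivIso_of_R_eq (h : R σ = R τ) : TrivIso σ τ := by
  induction hr : R σ using WellFoundedLT.induction generalizing σ τ with | ind r ih
  obtain ⟨f, hf, hfR, hσf⟩ := hasLeadingAtom σ
  obtain ⟨g, hg, hgR, hτg⟩ := hasLeadingAtom τ
  have hfg_R : R f = R g := by rw [hfR, hgR, h]
  have hfg : TrivIso f g := hf.trivIso_of_R_eq hg hfg_R fun _ _ h' hlt =>
    ih _ (hlt.trans_le (hfR ▸ hr ▸ opow_log_le_self ω (R_pos σ).ne')) h' rfl
  rcases hσf with hσf | ⟨ρ, hσf⟩ <;> rcases hτg with hτg | ⟨π, hτg⟩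
  · exact hσf.trans (hfg.trans hτg.symm)
  · exact absurd (hτg.R_eq.symm.trans (h.symm.trans (hσf.R_eq.trans hfg_R)))
      (R_lt_R_prod_left g π).ne'
  · exact absurd (hσf.R_eq.symm.trans (h.trans (hτg.R_eq.trans hfg_R.symm)))
      (R_lt_R_prod_left f ρ).ne'
  · have hρπ : R ρ = R π := (nadd_left_strictMono (R f)).injective <| by
      rw [← R_prod, ← hσf.R_eq, h, hτg.R_eq, R_prod, hfg_R]
    have hρ : R ρ < r := hr ▸ hσf.R_eq ▸ R_lt_R_prod_right f ρ
    exact hσf.trans ((hfg.prodCongr (ih _ hρ hρπ rfl)).trans hτg.symm)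

theorem exists_R_eq {α : Ordinal} (h0 : 0 < α) (hα : α < ε₀) : ∃ σ, R σ = α := by
  induction α using WellFoundedLT.induction with | ind α ih
  set e := log ω α
  have hle : ω ^ e ≤ α := opow_log_le_self ω h0.ne'
  obtain ⟨f, hf⟩ : ∃ f, R f = ω ^ e := by
    rcases eq_or_ne e 0 with he | he
    · exact ⟨N, by simp [he]⟩
    · have heε : e < ε₀ := ((right_le_opow e one_lt_omega0).trans hle).trans_lt hα
      have heα : e < α := (lt_omega0_opow_self_of_lt_epsilon_zero heε).trans_le hle
      obtain ⟨σ, hσ⟩ := ih e heα (pos_iff_ne_zero.2 he) heε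
      exact ⟨arrow σ N, by simp [hσ]⟩
  rcases eq_or_ne (α - ω ^ e) 0 with hβ | hβ
  · exact ⟨f, hf.trans (le_antisymm hle (Ordinal.sub_eq_zero_iff_le.1 hβ))⟩
  obtain ⟨ρ, hρ⟩ := ih _ (sub_omega0_opow_log_lt h0.ne') (pos_iff_ne_zero.2 hβ)
    ((sub_le_self _ _).trans_lt hα)
  refine ⟨prod f ρ, ?_⟩
  rw [R_prod, hf, hρ, omega0_opow_nadd_of_lt, Ordinal.add_sub_cancel_of_le hle]
  exact (sub_le_self _ _).trans_lt (lt_opow_succ_log_self one_lt_omega0 α)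

theorem trivIso_iff_R_eq : TrivIso σ τ ↔ R σ = R τ :=
  ⟨TrivIso.R_eq, trivIso_of_R_eq⟩

end SType

/-- The rank induces an order isomorphism between the quotient of the simple
types by trivial isomorphism (ordered by the relation induced by `≼`, i.e. by
comparison of ranks) and the ordinals `α` with `0 < α < ε₀`; in particular `≼`
induces a well-ordering of order type `ε₀` on the `∼`-classes. -/
theorem quotient_orderIso_ordinals_below_eps0 :
    ∃ f : Quotient trivSetoid ≃ {α : Ordinal // 0 < α ∧ α < eps0},
      ∀ σ τ : SType,
        (R σ ≤ R τ) ↔ (f (Quotient.mk trivSetoid σ) ≤ f (Quotient.mk trivSetoid τ)) := by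
  let rank (σ : SType) : {α : Ordinal // 0 < α ∧ α < eps0} :=
    ⟨R σ, R_pos σ, eps0_eq_epsilon_zero ▸ R_lt_epsilon_zero σ⟩
  have hker : trivSetoid = Setoid.ker rank :=
    Setoid.ext fun _ _ => by rw [Setoid.ker_def, Subtype.ext_iff]; exact trivIso_iff_R_eq
  have hsurj : Function.Surjective rank := fun ⟨α, h0, hα⟩ =>
    (exists_R_eq h0 (eps0_eq_epsilon_zero ▸ hα)).imp fun _ hσ => Subtype.ext hσ
  rw [hker]
  exact ⟨Setoid.quotientKerEquivOfSurjective rank hsurj, fun _ _ => Iff.rfl⟩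
end

section
/- For all ordinals α and β, if α ⊑ β then α ≤ β. -/
/-- `γ + δ` is a Cantor sum if the base-`ω` Cantor normal form of `γ + δ` is the
concatenation of the Cantor normal form of `γ` followed by that of `δ`. -/
def IsCantorSum (γ δ : Ordinal) : Prop :=
  Ordinal.CNF Ordinal.omega0 (γ + δ) =
    Ordinal.CNF Ordinal.omega0 γ ++ Ordinal.CNF Ordinal.omega0 δ

/-- The least binary relation `⊑` on ordinals closed under the six clauses. -/
inductive Sqsub : Ordinal → Ordinal → Prop
  | refl (α : Ordinal) : Sqsub α α
  | trans {α β γ : Ordinal} : Sqsub α β → Sqsub β γ → Sqsub α γ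
  | succ (α : Ordinal) : Sqsub α (α + 1)
  | mul_opow (α : Ordinal) (k : ℕ) :
      Sqsub (Ordinal.omega0 ^ α * k) (Ordinal.omega0 ^ (α + 1))
  | add {α β : Ordinal} (γ : Ordinal) : Sqsub α β →
      IsCantorSum γ α → IsCantorSum γ β → Sqsub (γ + α) (γ + β)
  | opow {α β : Ordinal} : Sqsub α β →
      Sqsub (Ordinal.omega0 ^ α) (Ordinal.omega0 ^ β)

open Ordinal in
/-- If `α ⊑ β` then `α ≤ β`. -/
theorem le_of_sqsub (α β : Ordinal) (h : Sqsub α β) : α ≤ β := by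
  induction h with
  | refl => exact le_rfl
  | trans _ _ hαβ hβγ => exact hαβ.trans hβγ
  | succ α => exact (lt_add_one α).le
  | mul_opow α k => exact (opow_mul_lt_opow (natCast_lt_omega0 k) (lt_add_one α)).le
  | add γ _ _ _ hαβ => exact add_le_add_right hαβ γ
  | opow _ hαβ => exact opow_le_opow_right omega0_pos hαβ
end

section
/- For every natural number k, there is no strictly increasing chain of length k+2 in the k-fold product of the flat domain of natural numbers: there is no strictly monotone function from Fin (k+2) to (Fin k → WithBot ℕ), where the latter carries the pointwise order. Equivalently, every strictly ascending chain in (Fin k → WithBot ℕ) has at most k+1 elements. -/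
/-! The coordinates of a point of `Fin k → FlatNat` that are not `⊥` form its support. In the flat
order a non-`⊥` coordinate can no longer grow, so along a strict chain the supports increase
strictly in the lattice of subsets of `Fin k`, whose chains have at most `k + 1` elements. -/

/-- The flat domain of natural numbers: the carrier is `WithBot ℕ`, ordered so
that `⊥` is below every numeral and distinct numerals are incomparable. -/
def FlatNat : Type := WithBot ℕ

namespace FlatNat

instance : PartialOrder FlatNat where
  le a b := a = (⊥ : WithBot ℕ) ∨ a = b
  le_refl a := Or.inr rfl
  le_trans a b c hab hbc := by
    rcases hab with h | h
    · exact Or.inl h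
    · rw [h]; exact hbc
  le_antisymm a b hab hba := by
    rcases hab with h | h
    · rcases hba with h' | h'
      · rw [h, h']
      · exact h'.symm
    · exact h

instance : OrderBot FlatNat where
  bot := (⊥ : WithBot ℕ)
  bot_le a := Or.inl rfl

instance : DecidableEq FlatNat := inferInstanceAs (DecidableEq (WithBot ℕ))

theorem eq_of_le_of_ne_bot {a b : FlatNat} (h : a ≤ b) (ha : a ≠ ⊥) : a = b :=
  h.resolve_left ha

variable {ι : Type*} [Fintype ι]

def support (f : ι → FlatNat) : Finset ι := {i | f i ≠ ⊥}

theorem mem_support {f : ι → FlatNat} {i : ι} : i ∈ support f ↔ f i ≠ ⊥ := by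
  simp [support]

theorem support_mono : Monotone (support : (ι → FlatNat) → Finset ι) :=
  fun f g hfg i hi => by
    rw [mem_support] at hi ⊢
    rwa [← eq_of_le_of_ne_bot (hfg i) hi]

theorem eq_of_le_of_support_eq {f g : ι → FlatNat} (hfg : f ≤ g) (hs : support f = support g) :
    f = g := by
  funext i
  by_cases hi : f i = ⊥
  · have hgi : g i = ⊥ := by
      by_contra hgi
      exact mem_support.1 (hs ▸ mem_support.2 hgi) hi
    rw [hi, hgi]
  · exact eq_of_le_of_ne_bot (hfg i) hi

theorem support_strictMono : StrictMono (support : (ι → FlatNat) → Finset ι) :=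
  fun _ _ hfg =>
    (support_mono hfg.le).lt_of_ne fun hs => hfg.ne (eq_of_le_of_support_eq hfg.le hs)

end FlatNat

theorem Fintype.le_card_add_one_of_strictMono {ι : Type*} [Fintype ι] {n : ℕ}
    {s : Fin n → Finset ι} (hs : StrictMono s) : n ≤ Fintype.card ι + 1 := by
  let cardOf : Fin n → Fin (Fintype.card ι + 1) :=
    fun i => ⟨(s i).card, Nat.lt_succ_of_le (Finset.card_le_univ _)⟩
  have hinj : Function.Injective cardOf := fun i j hij =>
    (Finset.card_strictMono.comp hs).injective (congrArg Fin.val hij)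
  simpa using Fintype.card_le_of_injective cardOf hinj

/-- There is no strictly increasing chain of length `k + 2` in the `k`-fold
product of the flat domain of natural numbers. -/
theorem no_long_chain (k : ℕ) :
    ¬ ∃ f : Fin (k + 2) → (Fin k → FlatNat), StrictMono f := by
  rintro ⟨f, hf⟩
  have := Fintype.le_card_add_one_of_strictMono (FlatNat.support_strictMono.comp hf)
  simp at this
end

section
/- Let k be a natural number and let f : (Fin k → WithBot ℕ) → (Fin k → WithBot ℕ) be monotone with x ≤ f x for all x. Then f is the identity function. -/
/-- Any monotone inflationary endofunction of the `k`-fold product of the flat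
domain of natural numbers is the identity. -/
theorem monotone_inflationary_eq_id (k : ℕ)
    (f : (Fin k → FlatNat) → (Fin k → FlatNat))
    (hmono : Monotone f) (hinfl : ∀ x, x ≤ f x) : f = id := by
  have hle : ∀ a b : FlatNat, a ≤ b ↔ (a = (⊥ : WithBot ℕ) ∨ a = b) := fun a b => Iff.rfl
  funext x
  funext i
  show f x i = x i
  rcases (hinfl x i : x i ≤ f x i) with hbot | heq
  · -- x i = ⊥; show f x i = ⊥
    -- helper: for any a ≠ ⊥, f x i ≤ a
    have key : ∀ a : FlatNat, a ≠ (⊥ : WithBot ℕ) → f x i ≤ a := by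
      intro a ha
      set y : Fin k → FlatNat := Function.update x i a with hy
      have hxy : x ≤ y := by
        intro j
        by_cases hj : j = i
        · subst hj
          rw [hy]
          simp only [Function.update_self]
          exact Or.inl hbot
        · rw [hy]
          simp only [Function.update_of_ne hj]
          exact Or.inr rfl
      have h1 : f x i ≤ f y i := hmono hxy i
      have h2 : y i ≤ f y i := hinfl y i
      have hyi : y i = a := by rw [hy]; simp
      rw [hyi] at h2
      rcases h2 with h | h
      · exact absurd h ha
      · rw [← h] at h1; exact h1
    have h0 := key ((0 : ℕ) : WithBot ℕ) WithBot.coe_ne_bot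
    have h1 := key ((1 : ℕ) : WithBot ℕ) WithBot.coe_ne_bot
    rw [hbot]
    rcases h0 with h | h
    · exact h
    · rcases h1 with h' | h'
      · exact h'
      · rw [h] at h'
        exact absurd (WithBot.coe_injective h') (by norm_num)
  · exact heq.symm
end

section
/- Let k be a natural number and let t, r : (Fin k → WithBot ℕ) → (Fin k → WithBot ℕ) be monotone functions with r (t x) = x for all x (so (t, r) is a retraction of the domain onto itself). Then t is strict: t ⊥ = ⊥, where ⊥ is the everywhere-bottom element. -/
/-!
A monotone map with a left inverse is injective, hence strictly monotone, so it cannot lower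
coheight. In `Fin k → FlatNat` the coheight of `x` is the number of coordinates at which `x` is
`⊥`: each strict step up defines at least one more coordinate, and a single coordinate can always
be defined. Thus `⊥` has coheight `k`, the largest possible, and `t ⊥` must be `⊥` everywhere too.
-/

open Finset

lemma Order.coheight_le_of_strictAnti {α : Type*} [Preorder α] {ρ : α → ℕ} (hρ : StrictAnti ρ)
    (x : α) : Order.coheight x ≤ ρ x := by
  simpa using Order.coheight_le_coheight_apply_of_strictMono (OrderDual.toDual ∘ ρ) hρ x

namespace FlatNat

instance inst_s17 : DecidableEq FlatNat := inferInstanceAs (DecidableEq (WithBot ℕ))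

variable {ι : Type*} [Fintype ι]

def botCount (x : ι → FlatNat) : ℕ := #{i | x i = ⊥}

lemma botCount_strictAnti : StrictAnti (botCount (ι := ι)) := by
  intro x y hxy
  have hsub : univ.filter (fun i => y i = ⊥) ⊆ univ.filter (fun i => x i = ⊥) := by
    intro i
    simpa only [mem_filter, mem_univ, true_and] using
      fun hy : y i = ⊥ => le_bot_iff.mp (hy ▸ hxy.le i)
  obtain ⟨j, hj⟩ := Function.ne_iff.mp hxy.ne
  have hxj : x j = ⊥ := by_contra fun h => hj ((hxy.le j).resolve_left h)
  refine card_lt_card ((ssubset_iff_of_subset hsub).mpr ⟨j, ?_, ?_⟩)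
  · simpa using hxj
  · simpa [hxj] using hj.symm

lemma botCount_update_add_one [DecidableEq ι] {x : ι → FlatNat} {i : ι} {v : FlatNat}
    (hi : x i = ⊥) (hv : v ≠ ⊥) : botCount (Function.update x i v) + 1 = botCount x := by
  have hfilter : univ.filter (fun j => Function.update x i v j = ⊥) =
      (univ.filter fun j => x j = ⊥).erase i := by
    ext j
    by_cases hji : j = i
    · subst hji
      simpa using hv
    · simp [hji]
  rw [botCount, hfilter, card_erase_add_one (by simpa using hi), botCount]

lemma botCount_le_coheight (x : ι → FlatNat) : (botCount x : ℕ∞) ≤ Order.coheight x := by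
  classical
  induction hn : botCount x generalizing x with
  | zero => simp
  | succ n ih =>
    obtain ⟨i, hi⟩ := card_ne_zero.mp (hn.trans_ne n.succ_ne_zero)
    replace hi : x i = ⊥ := (mem_filter.mp hi).2
    obtain ⟨v, hv⟩ : ∃ v : FlatNat, v ≠ ⊥ := ⟨WithBot.some 0, WithBot.coe_ne_bot⟩
    have hlt : x < Function.update x i v := lt_update_self_iff.mpr (hi ▸ bot_lt_iff_ne_bot.mpr hv)
    have hcount : botCount (Function.update x i v) = n := by
      have := botCount_update_add_one hi hv
      omega
    calc ((n + 1 : ℕ) : ℕ∞) = n + 1 := Nat.cast_succ n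
      _ ≤ Order.coheight (Function.update x i v) + 1 := by gcongr; exact ih _ hcount
      _ ≤ Order.coheight x := Order.coheight_add_one_le hlt

lemma coheight_eq_botCount (x : ι → FlatNat) : Order.coheight x = botCount x :=
  (Order.coheight_le_of_strictAnti botCount_strictAnti x).antisymm (botCount_le_coheight x)

lemma botCount_bot : botCount (⊥ : ι → FlatNat) = Fintype.card ι := by
  simp [botCount]

lemma eq_bot_of_card_le_botCount {x : ι → FlatNat} (h : Fintype.card ι ≤ botCount x) :
    x = ⊥ := by
  funext i
  exact card_filter_eq_iff.mp (h.antisymm' (card_filter_le _ _)) i (mem_univ i)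

end FlatNat

theorem retraction_strict_general (k : ℕ)
    (t r : (Fin k → FlatNat) → (Fin k → FlatNat))
    (ht : Monotone t) (hret : ∀ x, r (t x) = x) :
    t ⊥ = ⊥ := by
  have hts : StrictMono t := ht.strictMono_of_injective (Function.LeftInverse.injective hret)
  have hcoheight := Order.coheight_le_coheight_apply_of_strictMono t hts ⊥
  rw [FlatNat.coheight_eq_botCount, FlatNat.coheight_eq_botCount, FlatNat.botCount_bot,
    Nat.cast_le] at hcoheight
  exact FlatNat.eq_bot_of_card_le_botCount hcoheight

/-- Any retraction of the `k`-fold product of the flat domain of natural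
numbers onto itself is strict: the section maps bottom to bottom. -/
theorem retraction_strict (k : ℕ)
    (t r : (Fin k → FlatNat) → (Fin k → FlatNat))
    (ht : Monotone t) (hr : Monotone r) (hret : ∀ x, r (t x) = x) :
    t ⊥ = ⊥ :=
  retraction_strict_general k t r ht hret
end
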